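/- arXiv:2508.01256 — 2 statements merged into one kernel-verified Lean document; each statement's English description precedes it below -/
import Mathlib

section
/- Boundedness of the cubic interpolation operators. For every cell-centered grid function ω, ‖T_x ω‖ ≤ (5/4)·‖ω‖ and ‖T_y ω‖ ≤ (5/4)·‖ω‖. -/
open Finset

/-- A periodic grid function on the `Nx × Ny` staggered grid (periodicity is
automatic in the `ZMod` indexing).  The same index set represents
cell-centered, x-face and y-face values. -/
abbrev GridFn (Nx Ny : ℕ) := ZMod Nx × ZMod Ny → ℝ

variable {Nx Ny : ℕ}

/-- Discrete `L²` inner product `(ω, σ) = ∑ᵢⱼ hx·hy·ωᵢⱼ·σᵢⱼ`. -/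
noncomputable def gip [NeZero Nx] [NeZero Ny] (hx hy : ℝ) (ω σ : GridFn Nx Ny) : ℝ :=
  ∑ p : ZMod Nx × ZMod Ny, hx * hy * ω p * σ p

/-- Discrete `L²` norm. -/
noncomputable def gnorm [NeZero Nx] [NeZero Ny] (hx hy : ℝ) (ω : GridFn Nx Ny) : ℝ :=
  Real.sqrt (gip hx hy ω ω)

/-- `δ_x` mapping cell-centered functions to x-face functions. -/
noncomputable def dxc (hx : ℝ) (ω : GridFn Nx Ny) : GridFn Nx Ny :=
  fun p => (ω (p.1 + 1, p.2) - ω p) / hx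

/-- `δ_x` mapping x-face functions to cell-centered functions. -/
noncomputable def dxf (hx : ℝ) (ν : GridFn Nx Ny) : GridFn Nx Ny :=
  fun p => (ν p - ν (p.1 - 1, p.2)) / hx

/-- `δ_y` mapping cell-centered functions to y-face functions. -/
noncomputable def dyc (hy : ℝ) (ω : GridFn Nx Ny) : GridFn Nx Ny :=
  fun p => (ω (p.1, p.2 + 1) - ω p) / hy

/-- `δ_y` mapping y-face functions to cell-centered functions. -/
noncomputable def dyf (hy : ℝ) (ν : GridFn Nx Ny) : GridFn Nx Ny :=
  fun p => (ν p - ν (p.1, p.2 - 1)) / hy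

/-- Second difference `δ_x²`. -/
noncomputable def dxx (hx : ℝ) (ω : GridFn Nx Ny) : GridFn Nx Ny :=
  fun p => (ω (p.1 + 1, p.2) - 2 * ω p + ω (p.1 - 1, p.2)) / hx ^ 2

/-- Second difference `δ_y²`. -/
noncomputable def dyy (hy : ℝ) (ω : GridFn Nx Ny) : GridFn Nx Ny :=
  fun p => (ω (p.1, p.2 + 1) - 2 * ω p + ω (p.1, p.2 - 1)) / hy ^ 2

/-- Compact operator `L_x = Id + (hx²/24)·δ_x²`. -/
noncomputable def opLx (hx : ℝ) (ω : GridFn Nx Ny) : GridFn Nx Ny :=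
  fun p => ω p + hx ^ 2 / 24 * dxx hx ω p

/-- Compact operator `L_y = Id + (hy²/24)·δ_y²`. -/
noncomputable def opLy (hy : ℝ) (ω : GridFn Nx Ny) : GridFn Nx Ny :=
  fun p => ω p + hy ^ 2 / 24 * dyy hy ω p

/-- Compact operator `ℒ = L_x ∘ L_y`. -/
noncomputable def opLL (hx hy : ℝ) (ω : GridFn Nx Ny) : GridFn Nx Ny :=
  opLx hx (opLy hy ω)

/-- Cubic interpolation operator `T_x` (cell-centered to x-face). -/
noncomputable def Tx (ω : GridFn Nx Ny) : GridFn Nx Ny :=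
  fun p => (-ω (p.1 - 1, p.2) + 9 * ω p + 9 * ω (p.1 + 1, p.2) - ω (p.1 + 2, p.2)) / 16

/-- Cubic interpolation operator `T_y` (cell-centered to y-face). -/
noncomputable def Ty (ω : GridFn Nx Ny) : GridFn Nx Ny :=
  fun p => (-ω (p.1, p.2 - 1) + 9 * ω p + 9 * ω (p.1, p.2 + 1) - ω (p.1, p.2 + 2)) / 16

/-!
`T_x` and `T_y` are stencils: combinations of translates of `ω` with weights
`-1/16, 9/16, 9/16, -1/16`. Translation is an isometry of `ℓ²` on a finite group, so by the
triangle inequality a stencil has `ℓ²` operator norm at most the `ℓ¹` norm of its weights,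
here `20/16 = 5/4`. The discrete norm is `√(hx·hy)` times the `ℓ²` norm, so the bound carries over.
-/

section Stencil

variable {G : Type*} [AddGroup G] [Fintype G]

theorem norm_toLp_comp_add_right (a : G) (f : G → ℝ) :
    ‖(WithLp.toLp 2 fun p => f (p + a) : EuclideanSpace ℝ G)‖ =
      ‖(WithLp.toLp 2 f : EuclideanSpace ℝ G)‖ := by
  simp only [EuclideanSpace.norm_eq]
  exact congrArg Real.sqrt (Equiv.sum_comp (Equiv.addRight a) fun p => ‖f p‖ ^ 2)

theorem norm_toLp_stencil_le {ι : Type*} (s : Finset ι) (c : ι → ℝ) (a : ι → G) (f : G → ℝ) :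
    ‖(WithLp.toLp 2 fun p => ∑ k ∈ s, c k * f (p + a k) : EuclideanSpace ℝ G)‖ ≤
      (∑ k ∈ s, |c k|) * ‖(WithLp.toLp 2 f : EuclideanSpace ℝ G)‖ := by
  have hsum : (WithLp.toLp 2 fun p => ∑ k ∈ s, c k * f (p + a k) : EuclideanSpace ℝ G) =
      ∑ k ∈ s, c k • (WithLp.toLp 2 fun p => f (p + a k) : EuclideanSpace ℝ G) := by
    ext p
    simp [Finset.sum_apply]
  calc _ ≤ ∑ k ∈ s, ‖c k • (WithLp.toLp 2 fun p => f (p + a k) : EuclideanSpace ℝ G)‖ :=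
        hsum ▸ norm_sum_le _ _
    _ = _ := by
        simp only [norm_smul, Real.norm_eq_abs, norm_toLp_comp_add_right, Finset.sum_mul]

end Stencil

theorem gnorm_eq_sqrt_mul_norm [NeZero Nx] [NeZero Ny] (hx hy : ℝ) (ω : GridFn Nx Ny) :
    gnorm hx hy ω = √(hx * hy) * ‖(WithLp.toLp 2 ω : EuclideanSpace ℝ (ZMod Nx × ZMod Ny))‖ := by
  rw [gnorm, gip, EuclideanSpace.norm_eq, ← Real.sqrt_mul' _ (by positivity), Finset.mul_sum]
  congr 1
  refine Finset.sum_congr rfl fun p _ => ?_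
  simp only [Real.norm_eq_abs, sq_abs]
  ring

noncomputable def cubicWeights : Fin 4 → ℝ := ![-1 / 16, 9 / 16, 9 / 16, -1 / 16]

theorem sum_abs_cubicWeights : ∑ k, |cubicWeights k| = 5 / 4 := by
  simp only [cubicWeights, Fin.sum_univ_four, Matrix.cons_val]
  norm_num

theorem Tx_eq_stencil (ω : GridFn Nx Ny) :
    Tx ω = fun p => ∑ k, cubicWeights k * ω (p + ![(-1, 0), (0, 0), (1, 0), (2, 0)] k) := by
  funext p
  simp only [Tx, cubicWeights, Fin.sum_univ_four, Matrix.cons_val, Prod.add_def, add_zero,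
    sub_eq_add_neg]
  ring

theorem Ty_eq_stencil (ω : GridFn Nx Ny) :
    Ty ω = fun p => ∑ k, cubicWeights k * ω (p + ![(0, -1), (0, 0), (0, 1), (0, 2)] k) := by
  funext p
  simp only [Ty, cubicWeights, Fin.sum_univ_four, Matrix.cons_val, Prod.add_def, add_zero,
    sub_eq_add_neg]
  ring

theorem gnorm_le_of_norm_toLp_le [NeZero Nx] [NeZero Ny] (hx hy C : ℝ) {ω σ : GridFn Nx Ny}
    (h : ‖(WithLp.toLp 2 σ : EuclideanSpace ℝ (ZMod Nx × ZMod Ny))‖ ≤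
      C * ‖(WithLp.toLp 2 ω : EuclideanSpace ℝ (ZMod Nx × ZMod Ny))‖) :
    gnorm hx hy σ ≤ C * gnorm hx hy ω := by
  rw [gnorm_eq_sqrt_mul_norm, gnorm_eq_sqrt_mul_norm, mul_left_comm]
  exact mul_le_mul_of_nonneg_left h (Real.sqrt_nonneg _)

theorem interp_op_bounds_general [NeZero Nx] [NeZero Ny]
    (hx hy : ℝ) (ω : GridFn Nx Ny) :
    gnorm hx hy (Tx ω) ≤ 5 / 4 * gnorm hx hy ω ∧
    gnorm hx hy (Ty ω) ≤ 5 / 4 * gnorm hx hy ω := by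
  rw [← sum_abs_cubicWeights, Tx_eq_stencil, Ty_eq_stencil]
  exact ⟨gnorm_le_of_norm_toLp_le hx hy _ (norm_toLp_stencil_le _ _ _ ω),
    gnorm_le_of_norm_toLp_le hx hy _ (norm_toLp_stencil_le _ _ _ ω)⟩

/-- **Lemma 3.4 (boundedness of the cubic interpolation operators).**
`‖T_x ω‖ ≤ (5/4)·‖ω‖` and `‖T_y ω‖ ≤ (5/4)·‖ω‖`. -/
theorem interp_op_bounds [NeZero Nx] [NeZero Ny]
    (hx hy : ℝ) (hhx : 0 < hx) (hhy : 0 < hy) (ω : GridFn Nx Ny) :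
    gnorm hx hy (Tx ω) ≤ 5 / 4 * gnorm hx hy ω ∧
    gnorm hx hy (Ty ω) ≤ 5 / 4 * gnorm hx hy ω :=
  interp_op_bounds_general hx hy ω
end

section
/- Unique solvability of the discrete pressure–velocity step. Let a_* > 0, let α be an x-face grid function with α_{i,j} ≥ a_* for all (i,j), let β be a y-face grid function with β_{i,j} ≥ a_* for all (i,j), and let f be a cell-centered grid function with ∑_{i,j} f_{i,j} = 0. Then there exist a unique cell-centered grid function P with P_{0,0} = 0, a unique x-face grid function Uˣ, and a unique y-face grid function Uʸ such that, pointwise on the grid, L_y δ_x Uˣ + L_x δ_y Uʸ = ℒ f, L_x(α·Uˣ) + δ_x P = 0, and L_y(β·Uʸ) + δ_y P = 0. -/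
open Finset

variable {Nx Ny : ℕ}

section Aux
variable [NeZero Nx] [NeZero Ny]

lemma sum_shift (g : GridFn Nx Ny) (a : ZMod Nx) (b : ZMod Ny) :
    ∑ p : ZMod Nx × ZMod Ny, g (p.1 + a, p.2 + b) = ∑ p : ZMod Nx × ZMod Ny, g p :=
  Fintype.sum_equiv ((Equiv.addRight a).prodCongr (Equiv.addRight b)) _ _ (fun _ => rfl)

lemma sum_sx (g : GridFn Nx Ny) : ∑ p : ZMod Nx × ZMod Ny, g (p.1 + 1, p.2) = ∑ p, g p := by
  simpa using sum_shift g 1 0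

lemma sum_sx' (g : GridFn Nx Ny) : ∑ p : ZMod Nx × ZMod Ny, g (p.1 - 1, p.2) = ∑ p, g p := by
  simpa [sub_eq_add_neg] using sum_shift g (-1) 0

lemma sum_sy (g : GridFn Nx Ny) : ∑ p : ZMod Nx × ZMod Ny, g (p.1, p.2 + 1) = ∑ p, g p := by
  simpa using sum_shift g 0 1

lemma sum_sy' (g : GridFn Nx Ny) : ∑ p : ZMod Nx × ZMod Ny, g (p.1, p.2 - 1) = ∑ p, g p := by
  simpa [sub_eq_add_neg] using sum_shift g 0 (-1)

lemma shiftx1 (u v : GridFn Nx Ny) :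
    ∑ p : ZMod Nx × ZMod Ny, u (p.1 + 1, p.2) * v p = ∑ p, u p * v (p.1 - 1, p.2) := by
  simpa [add_sub_cancel_right] using sum_shift (fun p => u p * v (p.1 - 1, p.2)) 1 0

lemma shiftx2 (u v : GridFn Nx Ny) :
    ∑ p : ZMod Nx × ZMod Ny, u (p.1 - 1, p.2) * v p = ∑ p, u p * v (p.1 + 1, p.2) := by
  simpa [sub_add_cancel, sub_eq_add_neg] using sum_shift (fun p => u p * v (p.1 + 1, p.2)) (-1) 0

lemma shifty1 (u v : GridFn Nx Ny) :
    ∑ p : ZMod Nx × ZMod Ny, u (p.1, p.2 + 1) * v p = ∑ p, u p * v (p.1, p.2 - 1) := by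
  simpa [add_sub_cancel_right] using sum_shift (fun p => u p * v (p.1, p.2 - 1)) 0 1

lemma shifty2 (u v : GridFn Nx Ny) :
    ∑ p : ZMod Nx × ZMod Ny, u (p.1, p.2 - 1) * v p = ∑ p, u p * v (p.1, p.2 + 1) := by
  simpa [sub_add_cancel, sub_eq_add_neg] using sum_shift (fun p => u p * v (p.1, p.2 + 1)) 0 (-1)

lemma sum_dxf (hx : ℝ) (ν : GridFn Nx Ny) : ∑ p : ZMod Nx × ZMod Ny, dxf hx ν p = 0 := by
  simp only [dxf, ← Finset.sum_div, Finset.sum_sub_distrib, sum_sx' ν]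
  simp

lemma sum_dyf (hy : ℝ) (ν : GridFn Nx Ny) : ∑ p : ZMod Nx × ZMod Ny, dyf hy ν p = 0 := by
  simp only [dyf, ← Finset.sum_div, Finset.sum_sub_distrib, sum_sy' ν]
  simp

lemma sum_opLx (hx : ℝ) (g : GridFn Nx Ny) :
    ∑ p : ZMod Nx × ZMod Ny, opLx hx g p = ∑ p, g p := by
  simp only [opLx, dxx, Finset.sum_add_distrib, ← Finset.mul_sum, ← Finset.sum_div]
  simp only [Finset.sum_add_distrib, Finset.sum_sub_distrib, sum_sx g, sum_sx' g, ← Finset.mul_sum]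
  ring

lemma sum_opLy (hy : ℝ) (g : GridFn Nx Ny) :
    ∑ p : ZMod Nx × ZMod Ny, opLy hy g p = ∑ p, g p := by
  simp only [opLy, dyy, Finset.sum_add_distrib, ← Finset.mul_sum, ← Finset.sum_div]
  simp only [Finset.sum_add_distrib, Finset.sum_sub_distrib, sum_sy g, sum_sy' g, ← Finset.mul_sum]
  ring

end Aux
section Aux2
variable [NeZero Nx] [NeZero Ny]

lemma sum_opLx_mul (hx : ℝ) (u v : GridFn Nx Ny) :
    ∑ p : ZMod Nx × ZMod Ny, opLx hx u p * v p = ∑ p, u p * opLx hx v p := by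
  rw [← sub_eq_zero, ← Finset.sum_sub_distrib]
  have key : ∀ p ∈ Finset.univ, opLx hx u p * v p - u p * opLx hx v p
      = hx ^ 2 / 24 / hx ^ 2 * ((u (p.1 + 1, p.2) * v p - u p * v (p.1 - 1, p.2))
        + (u (p.1 - 1, p.2) * v p - u p * v (p.1 + 1, p.2))) := by
    intro p _; simp only [opLx, dxx]; ring
  rw [Finset.sum_congr rfl key, ← Finset.mul_sum, Finset.sum_add_distrib,
    Finset.sum_sub_distrib, Finset.sum_sub_distrib, shiftx1, shiftx2]
  ring

lemma sum_opLy_mul (hy : ℝ) (u v : GridFn Nx Ny) :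
    ∑ p : ZMod Nx × ZMod Ny, opLy hy u p * v p = ∑ p, u p * opLy hy v p := by
  rw [← sub_eq_zero, ← Finset.sum_sub_distrib]
  have key : ∀ p ∈ Finset.univ, opLy hy u p * v p - u p * opLy hy v p
      = hy ^ 2 / 24 / hy ^ 2 * ((u (p.1, p.2 + 1) * v p - u p * v (p.1, p.2 - 1))
        + (u (p.1, p.2 - 1) * v p - u p * v (p.1, p.2 + 1))) := by
    intro p _; simp only [opLy, dyy]; ring
  rw [Finset.sum_congr rfl key, ← Finset.mul_sum, Finset.sum_add_distrib,
    Finset.sum_sub_distrib, Finset.sum_sub_distrib, shifty1, shifty2]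
  ring

lemma sum_dxf_mul (hx : ℝ) (u v : GridFn Nx Ny) :
    ∑ p : ZMod Nx × ZMod Ny, dxf hx u p * v p = -∑ p, u p * dxc hx v p := by
  have key : ∀ p ∈ Finset.univ, dxf hx u p * v p + u p * dxc hx v p
      = (u p * v (p.1 + 1, p.2) - u (p.1 - 1, p.2) * v p) / hx := by
    intro p _; simp only [dxf, dxc]; ring
  have h : ∑ p : ZMod Nx × ZMod Ny, (dxf hx u p * v p + u p * dxc hx v p) = 0 := by
    rw [Finset.sum_congr rfl key, ← Finset.sum_div, Finset.sum_sub_distrib, shiftx2]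
    simp
  rw [Finset.sum_add_distrib] at h
  linarith

lemma sum_dyf_mul (hy : ℝ) (u v : GridFn Nx Ny) :
    ∑ p : ZMod Nx × ZMod Ny, dyf hy u p * v p = -∑ p, u p * dyc hy v p := by
  have key : ∀ p ∈ Finset.univ, dyf hy u p * v p + u p * dyc hy v p
      = (u p * v (p.1, p.2 + 1) - u (p.1, p.2 - 1) * v p) / hy := by
    intro p _; simp only [dyf, dyc]; ring
  have h : ∑ p : ZMod Nx × ZMod Ny, (dyf hy u p * v p + u p * dyc hy v p) = 0 := by
    rw [Finset.sum_congr rfl key, ← Finset.sum_div, Finset.sum_sub_distrib, shifty2]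
    simp
  rw [Finset.sum_add_distrib] at h
  linarith

end Aux2

section Comm
variable {hx hy : ℝ}

lemma comm_dxc_Lx (ω : GridFn Nx Ny) : dxc hx (opLx hx ω) = opLx hx (dxc hx ω) := by
  funext p
  simp only [opLx, dxx, dxc, add_sub_cancel_right, sub_add_cancel]
  ring

lemma comm_dxc_Ly (ω : GridFn Nx Ny) : dxc hx (opLy hy ω) = opLy hy (dxc hx ω) := by
  funext p
  simp only [opLy, dyy, dxc]
  ring

lemma comm_dyc_Ly (ω : GridFn Nx Ny) : dyc hy (opLy hy ω) = opLy hy (dyc hy ω) := by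
  funext p
  simp only [opLy, dyy, dyc, add_sub_cancel_right, sub_add_cancel]
  ring

lemma comm_dyc_Lx (ω : GridFn Nx Ny) : dyc hy (opLx hx ω) = opLx hx (dyc hy ω) := by
  funext p
  simp only [opLx, dxx, dyc]
  ring

lemma opLx_add_pt (u v : GridFn Nx Ny) (p) :
    opLx hx (fun q => u q + v q) p = opLx hx u p + opLx hx v p := by
  simp only [opLx, dxx]; ring

lemma opLy_add_pt (u v : GridFn Nx Ny) (p) :
    opLy hy (fun q => u q + v q) p = opLy hy u p + opLy hy v p := by
  simp only [opLy, dyy]; ring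

end Comm
section Inj
variable [NeZero Nx] [NeZero Ny]

lemma opLx_inj {hx : ℝ} (hhx : hx ≠ 0) (ω : GridFn Nx Ny) (h : ∀ p, opLx hx ω p = 0) :
    ω = 0 := by
  set T := ∑ p : ZMod Nx × ZMod Ny, ω p * ω p with hT
  set U := ∑ p : ZMod Nx × ZMod Ny, ω (p.1 + 1, p.2) * ω p with hU
  have hU' : ∑ p : ZMod Nx × ZMod Ny, ω (p.1 - 1, p.2) * ω p = U := by
    rw [shiftx2]; rw [hU]
    exact Finset.sum_congr rfl fun p _ => mul_comm _ _
  have hS : (0 : ℝ) = T + 1 / 24 * (U - 2 * T + U) := by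
    have e : ∑ p : ZMod Nx × ZMod Ny, opLx hx ω p * ω p = 0 := by
      apply Finset.sum_eq_zero; intro p _; rw [h p, zero_mul]
    have e2 : ∑ p : ZMod Nx × ZMod Ny, opLx hx ω p * ω p
        = T + 1 / 24 * (U - 2 * T + U) := by
      have key : ∀ p ∈ Finset.univ, opLx hx ω p * ω p
          = ω p * ω p + 1 / 24 * (ω (p.1 + 1, p.2) * ω p - 2 * (ω p * ω p)
            + ω (p.1 - 1, p.2) * ω p) := by
        intro p _; simp only [opLx, dxx]; field_simp
      rw [Finset.sum_congr rfl key, Finset.sum_add_distrib, ← Finset.mul_sum,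
        Finset.sum_add_distrib, Finset.sum_sub_distrib, ← Finset.mul_sum, hU']
    rw [← e, e2]
  have hpos : (0 : ℝ) ≤ 2 * T + 2 * U := by
    have : ∑ p : ZMod Nx × ZMod Ny, (ω (p.1 + 1, p.2) + ω p) ^ 2 = 2 * T + 2 * U := by
      have key : ∀ p ∈ Finset.univ, (ω (p.1 + 1, p.2) + ω p) ^ 2
          = ω (p.1 + 1, p.2) * ω (p.1 + 1, p.2) + 2 * (ω (p.1 + 1, p.2) * ω p)
            + ω p * ω p := by intro p _; ring
      rw [Finset.sum_congr rfl key, Finset.sum_add_distrib, Finset.sum_add_distrib,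
        ← Finset.mul_sum, ← hU, ← hT]
      have : ∑ p : ZMod Nx × ZMod Ny, ω (p.1 + 1, p.2) * ω (p.1 + 1, p.2) = T := by
        rw [hT]; exact sum_sx (fun p => ω p * ω p)
      rw [this]; ring
    rw [← this]
    exact Finset.sum_nonneg fun p _ => sq_nonneg _
  have hTnn : (0 : ℝ) ≤ T := Finset.sum_nonneg fun p _ => mul_self_nonneg _
  have hT0 : T = 0 := by linarith
  funext p
  have := (Finset.sum_eq_zero_iff_of_nonneg (fun p _ => mul_self_nonneg (ω p))).mp hT0
    p (Finset.mem_univ p)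
  simpa [mul_self_eq_zero] using this

lemma opLy_inj {hy : ℝ} (hhy : hy ≠ 0) (ω : GridFn Nx Ny) (h : ∀ p, opLy hy ω p = 0) :
    ω = 0 := by
  set T := ∑ p : ZMod Nx × ZMod Ny, ω p * ω p with hT
  set U := ∑ p : ZMod Nx × ZMod Ny, ω (p.1, p.2 + 1) * ω p with hU
  have hU' : ∑ p : ZMod Nx × ZMod Ny, ω (p.1, p.2 - 1) * ω p = U := by
    rw [shifty2]; rw [hU]
    exact Finset.sum_congr rfl fun p _ => mul_comm _ _
  have hS : (0 : ℝ) = T + 1 / 24 * (U - 2 * T + U) := by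
    have e : ∑ p : ZMod Nx × ZMod Ny, opLy hy ω p * ω p = 0 := by
      apply Finset.sum_eq_zero; intro p _; rw [h p, zero_mul]
    have e2 : ∑ p : ZMod Nx × ZMod Ny, opLy hy ω p * ω p
        = T + 1 / 24 * (U - 2 * T + U) := by
      have key : ∀ p ∈ Finset.univ, opLy hy ω p * ω p
          = ω p * ω p + 1 / 24 * (ω (p.1, p.2 + 1) * ω p - 2 * (ω p * ω p)
            + ω (p.1, p.2 - 1) * ω p) := by
        intro p _; simp only [opLy, dyy]; field_simp
      rw [Finset.sum_congr rfl key, Finset.sum_add_distrib, ← Finset.mul_sum,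
        Finset.sum_add_distrib, Finset.sum_sub_distrib, ← Finset.mul_sum, hU']
    rw [← e, e2]
  have hpos : (0 : ℝ) ≤ 2 * T + 2 * U := by
    have : ∑ p : ZMod Nx × ZMod Ny, (ω (p.1, p.2 + 1) + ω p) ^ 2 = 2 * T + 2 * U := by
      have key : ∀ p ∈ Finset.univ, (ω (p.1, p.2 + 1) + ω p) ^ 2
          = ω (p.1, p.2 + 1) * ω (p.1, p.2 + 1) + 2 * (ω (p.1, p.2 + 1) * ω p)
            + ω p * ω p := by intro p _; ring
      rw [Finset.sum_congr rfl key, Finset.sum_add_distrib, Finset.sum_add_distrib,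
        ← Finset.mul_sum, ← hU, ← hT]
      have : ∑ p : ZMod Nx × ZMod Ny, ω (p.1, p.2 + 1) * ω (p.1, p.2 + 1) = T := by
        rw [hT]; exact sum_sy (fun p => ω p * ω p)
      rw [this]; ring
    rw [← this]
    exact Finset.sum_nonneg fun p _ => sq_nonneg _
  have hTnn : (0 : ℝ) ≤ T := Finset.sum_nonneg fun p _ => mul_self_nonneg _
  have hT0 : T = 0 := by linarith
  funext p
  have := (Finset.sum_eq_zero_iff_of_nonneg (fun p _ => mul_self_nonneg (ω p))).mp hT0
    p (Finset.mem_univ p)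
  simpa [mul_self_eq_zero] using this

noncomputable def LxMap [NeZero Nx] [NeZero Ny] (hx : ℝ) : GridFn Nx Ny →ₗ[ℝ] GridFn Nx Ny where
  toFun := opLx hx
  map_add' u v := by funext p; simp only [opLx, dxx, Pi.add_apply]; ring
  map_smul' c u := by
    funext p
    simp only [opLx, dxx, Pi.smul_apply, smul_eq_mul, RingHom.id_apply]; ring

noncomputable def LyMap [NeZero Nx] [NeZero Ny] (hy : ℝ) : GridFn Nx Ny →ₗ[ℝ] GridFn Nx Ny where
  toFun := opLy hy
  map_add' u v := by funext p; simp only [opLy, dyy, Pi.add_apply]; ring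
  map_smul' c u := by
    funext p
    simp only [opLy, dyy, Pi.smul_apply, smul_eq_mul, RingHom.id_apply]; ring

lemma opLx_surj {hx : ℝ} (hhx : hx ≠ 0) (g : GridFn Nx Ny) : ∃ w, opLx hx w = g := by
  have hinj : Function.Injective (LxMap (Nx := Nx) (Ny := Ny) hx) := by
    rw [injective_iff_map_eq_zero]
    intro ω hω
    exact opLx_inj hhx ω (fun p => congrFun hω p)
  exact (LinearMap.injective_iff_surjective.mp hinj) g

lemma opLy_surj {hy : ℝ} (hhy : hy ≠ 0) (g : GridFn Nx Ny) : ∃ w, opLy hy w = g := by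
  have hinj : Function.Injective (LyMap (Nx := Nx) (Ny := Ny) hy) := by
    rw [injective_iff_map_eq_zero]
    intro ω hω
    exact opLy_inj hhy ω (fun p => congrFun hω p)
  exact (LinearMap.injective_iff_surjective.mp hinj) g

lemma const_of_diff_zero (P : GridFn Nx Ny)
    (hX : ∀ p : ZMod Nx × ZMod Ny, P (p.1 + 1, p.2) = P p)
    (hY : ∀ p : ZMod Nx × ZMod Ny, P (p.1, p.2 + 1) = P p) :
    ∀ p : ZMod Nx × ZMod Ny, P p = P (0, 0) := by
  have hx' : ∀ (n : ℕ) (i : ZMod Nx) (j : ZMod Ny), P (i + n, j) = P (i, j) := by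
    intro n
    induction n with
    | zero => simp
    | succ n ih =>
      intro i j
      have h1 : ((n + 1 : ℕ) : ZMod Nx) = (n : ZMod Nx) + 1 := by push_cast; ring
      rw [h1, ← add_assoc]
      rw [hX (i + n, j)]
      exact ih i j
  have hy' : ∀ (n : ℕ) (i : ZMod Nx) (j : ZMod Ny), P (i, j + n) = P (i, j) := by
    intro n
    induction n with
    | zero => simp
    | succ n ih =>
      intro i j
      have h1 : ((n + 1 : ℕ) : ZMod Ny) = (n : ZMod Ny) + 1 := by push_cast; ring
      rw [h1, ← add_assoc]
      rw [hY (i, j + n)]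
      exact ih i j
  intro p
  obtain ⟨n, hn⟩ := ZMod.natCast_zmod_surjective (n := Nx) p.1
  obtain ⟨m, hm⟩ := ZMod.natCast_zmod_surjective (n := Ny) p.2
  have : P p = P (p.1, p.2) := by rw [Prod.mk.eta]
  rw [this, ← hn, ← hm]
  rw [show ((n : ZMod Nx) = 0 + n) by rw [zero_add], hx']
  rw [show ((m : ZMod Ny) = 0 + m) by rw [zero_add], hy']

end Inj
section Main
variable [NeZero Nx] [NeZero Ny]

lemma comm_Lx_Ly {hx hy : ℝ} (ω : GridFn Nx Ny) :
    opLx hx (opLy hy ω) = opLy hy (opLx hx ω) := by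
  funext p
  simp only [opLx, opLy, dxx, dyy]
  ring

lemma homog {hx hy : ℝ} (hhx : hx ≠ 0) (hhy : hy ≠ 0)
    {astar : ℝ} (ha : 0 < astar) (α β : GridFn Nx Ny)
    (hα : ∀ p, astar ≤ α p) (hβ : ∀ p, astar ≤ β p)
    (P Ux Uy : GridFn Nx Ny)
    (h0 : P (0, 0) = 0)
    (e1 : ∀ p, opLy hy (dxf hx Ux) p + opLx hx (dyf hy Uy) p = 0)
    (e2 : ∀ p, opLx hx (fun q => α q * Ux q) p + dxc hx P p = 0)
    (e3 : ∀ p, opLy hy (fun q => β q * Uy q) p + dyc hy P p = 0) :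
    P = 0 ∧ Ux = 0 ∧ Uy = 0 := by
  obtain ⟨Q1, hQ1⟩ := opLx_surj hhx P
  obtain ⟨Q, hQ⟩ := opLy_surj hhy Q1
  have hP : P = opLx hx (opLy hy Q) := by rw [hQ, hQ1]
  have hdxcP : dxc hx P = opLx hx (opLy hy (dxc hx Q)) := by
    rw [hP, comm_dxc_Lx (opLy hy Q), comm_dxc_Ly Q]
  have hdycP : dyc hy P = opLy hy (opLx hx (dyc hy Q)) := by
    rw [hP, comm_dyc_Lx (opLy hy Q), comm_dyc_Ly Q, comm_Lx_Ly]
  -- recover the velocity equations without the outer compact operator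
  have hr : (fun q => α q * Ux q + opLy hy (dxc hx Q) q) = 0 := by
    apply opLx_inj hhx
    intro p
    have hsplit : opLx hx (fun q => α q * Ux q + opLy hy (dxc hx Q) q) p
        = opLx hx (fun q => α q * Ux q) p + opLx hx (opLy hy (dxc hx Q)) p := by
      simp only [opLx, dxx]; ring
    rw [hsplit, ← hdxcP]
    exact e2 p
  have hs : (fun q => β q * Uy q + opLx hx (dyc hy Q) q) = 0 := by
    apply opLy_inj hhy
    intro p
    have hsplit : opLy hy (fun q => β q * Uy q + opLx hx (dyc hy Q) q) p
        = opLy hy (fun q => β q * Uy q) p + opLy hy (opLx hx (dyc hy Q)) p := by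
      simp only [opLy, dyy]; ring
    rw [hsplit, ← hdycP]
    exact e3 p
  -- energy identity
  have hc1 : dxc hx (opLy hy Q) = opLy hy (dxc hx Q) := comm_dxc_Ly Q
  have hc2 : dyc hy (opLx hx Q) = opLx hx (dyc hy Q) := comm_dyc_Lx Q
  have t1 : ∑ p : ZMod Nx × ZMod Ny, opLy hy (dxf hx Ux) p * Q p
      = ∑ p, α p * Ux p * Ux p := by
    rw [sum_opLy_mul, sum_dxf_mul]
    have step : ∀ p ∈ Finset.univ, Ux p * dxc hx (opLy hy Q) p
        = -(α p * Ux p * Ux p) := by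
      intro p _
      rw [hc1]
      have h2 : α p * Ux p + opLy hy (dxc hx Q) p = 0 := by
        have := congrFun hr p; simpa using this
      have h3 : opLy hy (dxc hx Q) p = -(α p * Ux p) := by linarith
      rw [h3]; ring
    rw [Finset.sum_congr rfl step, Finset.sum_neg_distrib, neg_neg]
  have t2 : ∑ p : ZMod Nx × ZMod Ny, opLx hx (dyf hy Uy) p * Q p
      = ∑ p, β p * Uy p * Uy p := by
    rw [sum_opLx_mul, sum_dyf_mul]
    have step : ∀ p ∈ Finset.univ, Uy p * dyc hy (opLx hx Q) p
        = -(β p * Uy p * Uy p) := by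
      intro p _
      rw [hc2]
      have h2 : β p * Uy p + opLx hx (dyc hy Q) p = 0 := by
        have := congrFun hs p; simpa using this
      have h3 : opLx hx (dyc hy Q) p = -(β p * Uy p) := by linarith
      rw [h3]; ring
    rw [Finset.sum_congr rfl step, Finset.sum_neg_distrib, neg_neg]
  have E : ∑ p : ZMod Nx × ZMod Ny, α p * Ux p * Ux p
      + ∑ p : ZMod Nx × ZMod Ny, β p * Uy p * Uy p = 0 := by
    have z : ∑ p : ZMod Nx × ZMod Ny,
        (opLy hy (dxf hx Ux) p * Q p + opLx hx (dyf hy Uy) p * Q p) = 0 := by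
      apply Finset.sum_eq_zero
      intro p _
      rw [← add_mul, e1 p, zero_mul]
    rw [Finset.sum_add_distrib, t1, t2] at z
    exact z
  have nn1 : ∀ p ∈ Finset.univ, (0 : ℝ) ≤ α p * Ux p * Ux p := by
    intro p _
    rw [mul_assoc]
    exact mul_nonneg (le_trans ha.le (hα p)) (mul_self_nonneg _)
  have nn2 : ∀ p ∈ Finset.univ, (0 : ℝ) ≤ β p * Uy p * Uy p := by
    intro p _
    rw [mul_assoc]
    exact mul_nonneg (le_trans ha.le (hβ p)) (mul_self_nonneg _)
  have s1nn := Finset.sum_nonneg nn1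
  have s2nn := Finset.sum_nonneg nn2
  have s1 : ∑ p : ZMod Nx × ZMod Ny, α p * Ux p * Ux p = 0 := by linarith
  have s2 : ∑ p : ZMod Nx × ZMod Ny, β p * Uy p * Uy p = 0 := by linarith
  have hUx : Ux = 0 := by
    funext p
    have := (Finset.sum_eq_zero_iff_of_nonneg nn1).mp s1 p (Finset.mem_univ p)
    have hap : 0 < α p := lt_of_lt_of_le ha (hα p)
    have : Ux p * Ux p = 0 := by
      rw [mul_assoc] at this
      exact (mul_eq_zero.mp this).resolve_left (ne_of_gt hap)
    simpa [mul_self_eq_zero] using this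
  have hUy : Uy = 0 := by
    funext p
    have := (Finset.sum_eq_zero_iff_of_nonneg nn2).mp s2 p (Finset.mem_univ p)
    have hap : 0 < β p := lt_of_lt_of_le ha (hβ p)
    have : Uy p * Uy p = 0 := by
      rw [mul_assoc] at this
      exact (mul_eq_zero.mp this).resolve_left (ne_of_gt hap)
    simpa [mul_self_eq_zero] using this
  have hdx0 : ∀ p : ZMod Nx × ZMod Ny, P (p.1 + 1, p.2) = P p := by
    intro p
    have h2 := e2 p
    rw [hUx] at h2
    have hz : opLx hx (fun q => α q * (0 : GridFn Nx Ny) q) p = 0 := by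
      simp [opLx, dxx]
    rw [hz, zero_add] at h2
    have := h2
    simp only [dxc, div_eq_zero_iff] at this
    rcases this with h | h
    · linarith [sub_eq_zero.mp (by linarith : P (p.1 + 1, p.2) - P p = 0)]
    · exact absurd h hhx
  have hdy0 : ∀ p : ZMod Nx × ZMod Ny, P (p.1, p.2 + 1) = P p := by
    intro p
    have h2 := e3 p
    rw [hUy] at h2
    have hz : opLy hy (fun q => β q * (0 : GridFn Nx Ny) q) p = 0 := by
      simp [opLy, dyy]
    rw [hz, zero_add] at h2
    simp only [dyc, div_eq_zero_iff] at h2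
    rcases h2 with h | h
    · linarith [sub_eq_zero.mp (by linarith : P (p.1, p.2 + 1) - P p = 0)]
    · exact absurd h hhy
  have hPc := const_of_diff_zero P hdx0 hdy0
  have hP0 : P = 0 := by
    funext p
    rw [hPc p, h0]; rfl
  exact ⟨hP0, hUx, hUy⟩

noncomputable def Fmap (hx hy : ℝ) (α β : GridFn Nx Ny) :
    (GridFn Nx Ny × GridFn Nx Ny × GridFn Nx Ny) →ₗ[ℝ]
      (GridFn Nx Ny × GridFn Nx Ny × GridFn Nx Ny) where
  toFun W := (fun p => opLy hy (dxf hx W.2.1) p + opLx hx (dyf hy W.2.2) p + W.1 (0, 0),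
      fun p => opLx hx (fun q => α q * W.2.1 q) p + dxc hx W.1 p,
      fun p => opLy hy (fun q => β q * W.2.2 q) p + dyc hy W.1 p)
  map_add' W W' := by
    refine Prod.ext ?_ (Prod.ext ?_ ?_) <;> funext p <;>
      simp only [Prod.fst_add, Prod.snd_add, Pi.add_apply, opLx, opLy, dxf, dyf, dxc, dyc,
        dxx, dyy] <;> ring
  map_smul' c W := by
    refine Prod.ext ?_ (Prod.ext ?_ ?_) <;> funext p <;>
      simp only [Prod.smul_fst, Prod.smul_snd, Pi.smul_apply, smul_eq_mul, RingHom.id_apply,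
        opLx, opLy, dxf, dyf, dxc, dyc, dxx, dyy] <;> ring

end Main

/-- **Unique solvability of the discrete pressure–velocity step (Theorem 3.2,
Part I).**  For coefficients bounded below by `a_* > 0` and a zero-mean source
`f`, there is a unique triple `(P, Uˣ, Uʸ)` with `P₀,₀ = 0` solving
`L_y δ_x Uˣ + L_x δ_y Uʸ = ℒ f`, `L_x(α Uˣ) + δ_x P = 0`,
`L_y(β Uʸ) + δ_y P = 0`. -/
theorem pressure_velocity_unique_solvability [NeZero Nx] [NeZero Ny]
    (hx hy : ℝ) (hhx : 0 < hx) (hhy : 0 < hy)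
    (astar : ℝ) (ha : 0 < astar) (α β f : GridFn Nx Ny)
    (hα : ∀ p, astar ≤ α p) (hβ : ∀ p, astar ≤ β p)
    (hf : ∑ p : ZMod Nx × ZMod Ny, f p = 0) :
    ∃! PU : GridFn Nx Ny × GridFn Nx Ny × GridFn Nx Ny,
      PU.1 (0, 0) = 0 ∧
      (∀ p, opLy hy (dxf hx PU.2.1) p + opLx hx (dyf hy PU.2.2) p = opLL hx hy f p) ∧
      (∀ p, opLx hx (fun q => α q * PU.2.1 q) p + dxc hx PU.1 p = 0) ∧
      (∀ p, opLy hy (fun q => β q * PU.2.2 q) p + dyc hy PU.1 p = 0) := by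
  have hhx' : hx ≠ 0 := ne_of_gt hhx
  have hhy' : hy ≠ 0 := ne_of_gt hhy
  have hcard : (0 : ℝ) < (Fintype.card (ZMod Nx × ZMod Ny) : ℝ) := by
    exact_mod_cast Fintype.card_pos
  have hFinj : Function.Injective (Fmap (Nx := Nx) (Ny := Ny) hx hy α β) := by
    rw [injective_iff_map_eq_zero]
    intro W hW
    have h1 : ∀ p, opLy hy (dxf hx W.2.1) p + opLx hx (dyf hy W.2.2) p + W.1 (0, 0) = 0 :=
      fun p => congrArg (fun G => G.1 p) hW
    have h2 : ∀ p, opLx hx (fun q => α q * W.2.1 q) p + dxc hx W.1 p = 0 :=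
      fun p => congrArg (fun G => G.2.1 p) hW
    have h3 : ∀ p, opLy hy (fun q => β q * W.2.2 q) p + dyc hy W.1 p = 0 :=
      fun p => congrArg (fun G => G.2.2 p) hW
    have hz : ∑ p : ZMod Nx × ZMod Ny,
        (opLy hy (dxf hx W.2.1) p + opLx hx (dyf hy W.2.2) p + W.1 (0, 0)) = 0 :=
      Finset.sum_eq_zero fun p _ => h1 p
    rw [Finset.sum_add_distrib, Finset.sum_add_distrib, sum_opLy, sum_dxf,
      sum_opLx, sum_dyf] at hz
    simp only [Finset.sum_const, Finset.card_univ, nsmul_eq_mul] at hz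
    have h00 : W.1 (0, 0) = 0 := by
      have : (Fintype.card (ZMod Nx × ZMod Ny) : ℝ) * W.1 (0, 0) = 0 := by linarith
      rcases mul_eq_zero.mp this with h | h
      · exact absurd h (ne_of_gt hcard)
      · exact h
    have e1 : ∀ p, opLy hy (dxf hx W.2.1) p + opLx hx (dyf hy W.2.2) p = 0 := by
      intro p; have := h1 p; rw [h00] at this; linarith
    obtain ⟨hp, hux, huy⟩ := homog hhx' hhy' ha α β hα hβ W.1 W.2.1 W.2.2 h00 e1 h2 h3
    exact Prod.ext hp (Prod.ext hux huy)
  have hFsurj := LinearMap.injective_iff_surjective.mp hFinj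
  have key : ∀ V : GridFn Nx Ny × GridFn Nx Ny × GridFn Nx Ny,
      (V.1 (0, 0) = 0 ∧
        (∀ p, opLy hy (dxf hx V.2.1) p + opLx hx (dyf hy V.2.2) p = opLL hx hy f p) ∧
        (∀ p, opLx hx (fun q => α q * V.2.1 q) p + dxc hx V.1 p = 0) ∧
        (∀ p, opLy hy (fun q => β q * V.2.2 q) p + dyc hy V.1 p = 0))
      ↔ Fmap hx hy α β V = (opLL hx hy f, 0, 0) := by
    intro V
    constructor
    · rintro ⟨c0, c1, c2, c3⟩
      refine Prod.ext ?_ (Prod.ext ?_ ?_)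
      · funext p
        show opLy hy (dxf hx V.2.1) p + opLx hx (dyf hy V.2.2) p + V.1 (0, 0)
          = opLL hx hy f p
        rw [c0, add_zero]; exact c1 p
      · funext p
        show opLx hx (fun q => α q * V.2.1 q) p + dxc hx V.1 p = (0 : GridFn Nx Ny) p
        rw [c2 p]; rfl
      · funext p
        show opLy hy (fun q => β q * V.2.2 q) p + dyc hy V.1 p = (0 : GridFn Nx Ny) p
        rw [c3 p]; rfl
    · intro hV
      have h1 : ∀ p, opLy hy (dxf hx V.2.1) p + opLx hx (dyf hy V.2.2) p + V.1 (0, 0)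
          = opLL hx hy f p := fun p => congrArg (fun G => G.1 p) hV
      have h2 : ∀ p, opLx hx (fun q => α q * V.2.1 q) p + dxc hx V.1 p = 0 :=
        fun p => congrArg (fun G => G.2.1 p) hV
      have h3 : ∀ p, opLy hy (fun q => β q * V.2.2 q) p + dyc hy V.1 p = 0 :=
        fun p => congrArg (fun G => G.2.2 p) hV
      have hz : ∑ p : ZMod Nx × ZMod Ny,
          (opLy hy (dxf hx V.2.1) p + opLx hx (dyf hy V.2.2) p + V.1 (0, 0))
          = ∑ p : ZMod Nx × ZMod Ny, opLL hx hy f p :=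
        Finset.sum_congr rfl fun p _ => h1 p
      have hzz : ∑ p : ZMod Nx × ZMod Ny, opLL hx hy f p = 0 := by
        simp only [opLL]; rw [sum_opLx, sum_opLy, hf]
      rw [hzz, Finset.sum_add_distrib, Finset.sum_add_distrib, sum_opLy, sum_dxf,
        sum_opLx, sum_dyf] at hz
      simp only [Finset.sum_const, Finset.card_univ, nsmul_eq_mul] at hz
      have c0 : V.1 (0, 0) = 0 := by
        have : (Fintype.card (ZMod Nx × ZMod Ny) : ℝ) * V.1 (0, 0) = 0 := by linarith
        rcases mul_eq_zero.mp this with h | h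
        · exact absurd h (ne_of_gt hcard)
        · exact h
      refine ⟨c0, fun p => ?_, h2, h3⟩
      have := h1 p; rw [c0, add_zero] at this; exact this
  obtain ⟨W, hW⟩ := hFsurj (opLL hx hy f, 0, 0)
  exact ⟨W, (key W).mpr hW, fun W' h' => hFinj (((key W').mp h').trans hW.symm)⟩
end
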